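/- arXiv:0705.1618 — 7 statements merged into one kernel-verified Lean document; each statement's English description precedes it below -/
import Mathlib

section
/- Let G be a just non-Dedekind (JND) group. Then G does not embed into a direct product of Dedekind groups; that is, if {H_i}_{i∈I} is any family of Dedekind groups and φ : G → ∏_{i∈I} H_i is an injective group homomorphism, a contradiction follows (equivalently, any group embedding into a direct product of Dedekind groups and having every proper quotient Dedekind is itself Dedekind). -/
/-!
In a Dedekind group every commutator `⁅a, b⁆` lies in `⟨a⟩ ∩ ⟨b⟩`, so it commutes with `a` and
`b`; moreover `⁅a, b⁆ ^ 2 = 1`. Otherwise, passing to `p`-parts gives `p`-elements `a, b` whose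
commutator has order `p ^ j ∤ 2`. If `orderOf b = p ^ B ≤ orderOf a`, then
`b ^ p ^ (B - 1) = (a ^ p ^ (B - 1)) ^ x` for some `x`, and `b * a ^ (-x)` has the same commutator
with `a` but smaller order: an infinite descent.

It follows that in a Dedekind group squares are central, and so are elements of order at most `2`.
Both properties pass to subgroups of direct products. Let `G` be such a subgroup that is JND, and
suppose `g * x * g⁻¹ ∉ ⟨x⟩`. Then `x ^ 2 ≠ 1`, so `⟨x ^ 2⟩` is a nontrivial normal subgroup. Since
`G ⧸ ⟨x ^ 2⟩` is Dedekind, `g * x * g⁻¹ ∈ ⟨x⟩ ⊔ ⟨x ^ 2⟩ = ⟨x⟩`, a contradiction.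
-/

/-- A group is Dedekind if every subgroup of it is normal. -/
def IsDedekind (G : Type*) [Group G] : Prop := ∀ H : Subgroup G, H.Normal

/-- A group is just non-Dedekind (JND) if it is not Dedekind but every quotient
by a nontrivial normal subgroup is Dedekind. -/
def IsJND (G : Type*) [Group G] : Prop :=
  ¬ IsDedekind G ∧
    ∀ (N : Subgroup G) (hN : N.Normal), N ≠ ⊥ →
      letI := hN
      IsDedekind (G ⧸ N)

open Subgroup
open scoped commutatorElement

theorem Nat.exists_prime_pow_dvd_and_not_dvd {n m : ℕ} (hn : n ≠ 0) (hm : m ≠ 0)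
    (h : ¬ n ∣ m) : ∃ p j, p.Prime ∧ p ^ j ∣ n ∧ ¬ p ^ j ∣ m := by
  by_contra! hall
  refine h ((Nat.factorization_le_iff_dvd hn hm).1 fun p => ?_)
  by_cases hp : p.Prime
  · exact (hp.pow_dvd_iff_le_factorization hm).1 (hall p _ hp (Nat.ordProj_dvd n p))
  · simp [Nat.factorization_eq_zero_of_not_prime n hp]

theorem Nat.prime_pow_dvd_choose_two {p j B : ℕ} (hp : p.Prime) (hpj : ¬ p ^ j ∣ 2)
    (hB : 2 * j ≤ B) : p ^ j ∣ (p ^ (B - 1)).choose 2 := by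
  have hj : j ≠ 0 := by rintro rfl; exact hpj (one_dvd 2)
  rw [Nat.choose_two_right]
  rcases hp.eq_two_or_odd' with rfl | hodd
  · have hj2 : j ≠ 1 := by rintro rfl; exact hpj dvd_rfl
    have hsplit : 2 ^ (B - 1) = 2 * 2 ^ (B - 2) := by rw [← pow_succ']; congr 1; omega
    rw [hsplit, mul_assoc, Nat.mul_div_cancel_left _ two_pos]
    exact (pow_dvd_pow 2 (by omega)).mul_right _
  · have h2 : 2 ∣ p ^ (B - 1) - 1 := by obtain ⟨k, hk⟩ := hodd.pow (n := B - 1); omega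
    rw [Nat.mul_div_assoc _ h2]
    exact (pow_dvd_pow p (by omega)).mul_right _

section Group

variable {G : Type*} [Group G]

theorem mem_zpowers_of_orderOf_dvd {x y z : G} (hx : IsOfFinOrder x) (hy : y ∈ zpowers x)
    (hz : z ∈ zpowers x) (h : orderOf y ∣ orderOf z) : y ∈ zpowers z := by
  obtain ⟨i, rfl⟩ := mem_zpowers_iff.1 hy
  obtain ⟨k, rfl⟩ := mem_zpowers_iff.1 hz
  set n : ℤ := (orderOf x : ℤ) with hn_def
  have hn : n ≠ 0 := Int.natCast_ne_zero.2 hx.orderOf_pos.ne'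
  -- with `g = gcd k n` and `n = g * m`, `x ^ k` and hence `x ^ i` are killed by `m`, which forces
  -- `g ∣ i`; Bézout's identity for `g` then exhibits `x ^ i` as a power of `x ^ k`
  obtain ⟨k', hk'⟩ := Int.gcd_dvd_left (a := k) (b := n)
  obtain ⟨m, hm⟩ := Int.gcd_dvd_right (a := k) (b := n)
  set g : ℤ := (Int.gcd k n : ℤ) with hg
  have hm0 : m ≠ 0 := by rintro rfl; simp [hn] at hm
  have hzm : (x ^ k) ^ m = 1 := by
    rw [← zpow_mul, ← orderOf_dvd_iff_zpow_eq_one, ← hn_def]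
    exact ⟨k', by rw [hk', hm]; ring⟩
  have hym : (x ^ i) ^ m = 1 := by
    rw [← orderOf_dvd_iff_zpow_eq_one] at hzm ⊢
    exact (Int.natCast_dvd_natCast.2 h).trans hzm
  rw [← zpow_mul, ← orderOf_dvd_iff_zpow_eq_one, ← hn_def, hm] at hym
  obtain ⟨w, rfl⟩ := (mul_dvd_mul_iff_right hm0).1 hym
  refine mem_zpowers_iff.2 ⟨Int.gcdA k n * w, ?_⟩
  have hx1 : x ^ n = 1 := zpow_natCast x _ ▸ pow_orderOf_eq_one x
  rw [← zpow_mul, hg, Int.gcd_eq_gcd_ab, add_mul, zpow_add, mul_assoc n, zpow_mul x n, hx1,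
    one_zpow, mul_one, mul_assoc]

theorem dvd_orderOf_pow_of_coprime {x : G} {q k : ℕ} (hq : q ∣ orderOf x) (hqk : q.Coprime k) :
    q ∣ orderOf (x ^ k) :=
  hqk.dvd_of_dvd_mul_left <| hq.trans <| orderOf_dvd_of_pow_eq_one <| by
    rw [pow_mul, pow_orderOf_eq_one]

theorem IsOfFinOrder.exists_coprime_orderOf_pow_eq_prime_pow {x : G} (hx : IsOfFinOrder x)
    {p : ℕ} (hp : p.Prime) : ∃ m, p.Coprime m ∧ ∃ A, orderOf (x ^ m) = p ^ A := by
  have hx0 := hx.orderOf_pos.ne'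
  refine ⟨_, Nat.coprime_ordCompl hp hx0, (orderOf x).factorization p, ?_⟩
  rw [orderOf_pow_of_dvd (Nat.ordCompl_pos p hx0).ne' (Nat.ordCompl_dvd _ p),
    Nat.div_div_self (Nat.ordProj_dvd _ p) hx0]

theorem mem_center_of_injective {K : Type*} [Group K] {f : G →* K} (hf : Function.Injective f)
    {y : G} (hy : f y ∈ center K) : y ∈ center G :=
  mem_center_iff.2 fun g => hf <| by simpa only [map_mul] using mem_center_iff.1 hy (f g)

theorem normal_zpowers_of_mem_center {z : G} (hz : z ∈ center G) : (zpowers z).Normal :=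
  ⟨fun n hn g => by rwa [mem_center_iff.1 (zpowers_le.2 hz hn) g, mul_inv_cancel_right]⟩

theorem commutatorElement_zpow_right {a b : G} (h : Commute ⁅a, b⁆ b) (n : ℤ) :
    ⁅a, b ^ n⁆ = ⁅a, b⁆ ^ n := by
  have hconj : a * b * a⁻¹ = ⁅a, b⁆ * b := by rw [commutatorElement_def]; group
  rw [commutatorElement_def a (b ^ n), ← conj_zpow, hconj, h.mul_zpow, mul_inv_cancel_right]

theorem commutatorElement_zpow_left {a b : G} (h : Commute ⁅a, b⁆ a) (n : ℤ) :
    ⁅a ^ n, b⁆ = ⁅a, b⁆ ^ n := by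
  have hba : Commute ⁅b, a⁆ a := by rw [← commutatorElement_inv]; exact h.inv_left
  rw [← commutatorElement_inv, commutatorElement_zpow_right hba, ← commutatorElement_inv,
    inv_zpow, inv_inv]

theorem mul_pow_of_commute_commutatorElement {u v : G} (hu : Commute ⁅v, u⁆ u)
    (hv : Commute ⁅v, u⁆ v) (n : ℕ) :
    (u * v) ^ n = ⁅v, u⁆ ^ n.choose 2 * u ^ n * v ^ n := by
  induction n with
  | zero => simp
  | succ n ih =>
    have hvu : v ^ n * u = ⁅v, u⁆ ^ n * u * v ^ n := by
      have hcomm : ⁅v ^ n, u⁆ = ⁅v, u⁆ ^ n := by simpa using commutatorElement_zpow_left hv n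
      rw [← hcomm, commutatorElement_def]
      group
    calc (u * v) ^ (n + 1) = ⁅v, u⁆ ^ n.choose 2 * u ^ n * (v ^ n * u) * v := by
          rw [pow_succ, ih]; group
      _ = ⁅v, u⁆ ^ n.choose 2 * (u ^ n * ⁅v, u⁆ ^ n) * u * v ^ n * v := by
          rw [hvu]; group
      _ = ⁅v, u⁆ ^ (n + 1).choose 2 * u ^ (n + 1) * v ^ (n + 1) := by
          rw [((hu.pow_pow n n).symm).eq, Nat.choose_succ_succ, Nat.choose_one_right, pow_add,
            pow_succ u, pow_succ v]
          group

end Group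

namespace IsDedekind

variable {G : Type*} [Group G]

theorem conj_mem_zpowers_sup {N : Subgroup G} [N.Normal] (hQ : IsDedekind (G ⧸ N)) (g x : G) :
    g * x * g⁻¹ ∈ zpowers x ⊔ N := by
  have hM := (hQ ((zpowers x).map (QuotientGroup.mk' N))).comap (QuotientGroup.mk' N)
  rw [comap_map_eq, QuotientGroup.ker_mk'] at hM
  exact hM.conj_mem x (mem_sup_left (mem_zpowers x)) g

variable (hD : IsDedekind G)
include hD

theorem conj_mem_zpowers (g x : G) : g * x * g⁻¹ ∈ zpowers x :=
  (hD _).conj_mem x (mem_zpowers x) g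

theorem commutatorElement_mem_zpowers_right (a b : G) : ⁅a, b⁆ ∈ zpowers b :=
  mul_mem (hD.conj_mem_zpowers a b) (inv_mem (mem_zpowers b))

theorem commutatorElement_mem_zpowers_left (a b : G) : ⁅a, b⁆ ∈ zpowers a := by
  rw [← inv_inv ⁅a, b⁆, commutatorElement_inv]
  exact inv_mem (hD.commutatorElement_mem_zpowers_right b a)

theorem commute_commutatorElement_right (a b : G) : Commute ⁅a, b⁆ b := by
  obtain ⟨t, ht⟩ := mem_zpowers_iff.1 (hD.commutatorElement_mem_zpowers_right a b)
  exact ht ▸ (Commute.refl b).zpow_left t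

theorem commute_commutatorElement_left (a b : G) : Commute ⁅a, b⁆ a := by
  obtain ⟨s, hs⟩ := mem_zpowers_iff.1 (hD.commutatorElement_mem_zpowers_left a b)
  exact hs ▸ (Commute.refl a).zpow_left s

theorem commutatorElement_zpow_eq_one {a b : G} {t : ℤ} (ht : b ^ t = ⁅a, b⁆) :
    ⁅a, b⁆ ^ t = 1 := by
  rw [← commutatorElement_zpow_right (hD.commute_commutatorElement_right a b), ht,
    commutatorElement_eq_one_iff_commute]
  exact (hD.commute_commutatorElement_left a b).symm

theorem isOfFinOrder_right {a b : G} (h : ⁅a, b⁆ ≠ 1) : IsOfFinOrder b := by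
  obtain ⟨t, ht⟩ := mem_zpowers_iff.1 (hD.commutatorElement_mem_zpowers_right a b)
  have ht0 : t ≠ 0 := by rintro rfl; exact h (by rw [← ht, zpow_zero])
  refine isOfFinOrder_iff_zpow_eq_one.2 ⟨t * t, mul_ne_zero ht0 ht0, ?_⟩
  rw [zpow_mul, ht, hD.commutatorElement_zpow_eq_one ht]

theorem isOfFinOrder_left {a b : G} (h : ⁅a, b⁆ ≠ 1) : IsOfFinOrder a :=
  hD.isOfFinOrder_right (a := b) (by rwa [← commutatorElement_inv, inv_ne_one])

theorem two_mul_le_of_orderOf_commutatorElement {p j B : ℕ} (hp : p.Prime) {a b : G}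
    (hb : orderOf b = p ^ B) (hc : orderOf ⁅a, b⁆ = p ^ j) : 2 * j ≤ B := by
  have hcb := hD.commutatorElement_mem_zpowers_right a b
  have hjB : j ≤ B := (Nat.pow_dvd_pow_iff_le_right hp.one_lt).1
    (hc ▸ hb ▸ orderOf_dvd_of_mem_zpowers hcb)
  -- writing `⁅a, b⁆ = b ^ t`, we have `⁅a, b⁆ ^ t = 1`, so `⁅a, b⁆` is a power of `b ^ p ^ j`
  obtain ⟨t, ht⟩ := mem_zpowers_iff.1 hcb
  obtain ⟨t', rfl⟩ : ((p ^ j : ℕ) : ℤ) ∣ t :=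
    hc ▸ orderOf_dvd_iff_zpow_eq_one.2 (hD.commutatorElement_zpow_eq_one ht)
  have hdvd : orderOf ⁅a, b⁆ ∣ orderOf (b ^ p ^ j) :=
    orderOf_dvd_of_mem_zpowers (mem_zpowers_iff.2 ⟨t', by rw [← ht, zpow_mul, zpow_natCast]⟩)
  rw [orderOf_pow_of_dvd (pow_ne_zero _ hp.ne_zero) (hb ▸ pow_dvd_pow p hjB), hb,
    Nat.pow_div hjB hp.pos, hc, Nat.pow_dvd_pow_iff_le_right hp.one_lt] at hdvd
  omega

theorem pow_mem_zpowers_pow_of_orderOf_commutatorElement {p j A B : ℕ} (hp : p.Prime)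
    (hj : j ≠ 0) {a b : G} (ha : orderOf a = p ^ A) (hb : orderOf b = p ^ B) (hBA : B ≤ A)
    (hc : orderOf ⁅a, b⁆ = p ^ j) : b ^ p ^ (B - 1) ∈ zpowers (a ^ p ^ (B - 1)) := by
  have hcb := hD.commutatorElement_mem_zpowers_right a b
  have hjB : j ≤ B := (Nat.pow_dvd_pow_iff_le_right hp.one_lt).1
    (hc ▸ hb ▸ orderOf_dvd_of_mem_zpowers hcb)
  have hafin : IsOfFinOrder a := orderOf_pos_iff.1 (ha ▸ pow_pos hp.pos A)
  have hbfin : IsOfFinOrder b := orderOf_pos_iff.1 (hb ▸ pow_pos hp.pos B)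
  have hord : orderOf (b ^ p ^ (B - 1)) = p := by
    rw [orderOf_pow_of_dvd (pow_ne_zero _ hp.ne_zero) (hb ▸ pow_dvd_pow p (by omega)), hb,
      Nat.pow_div (by omega) hp.pos, show B - (B - 1) = 1 by omega, pow_one]
  have hbc : b ^ p ^ (B - 1) ∈ zpowers ⁅a, b⁆ :=
    mem_zpowers_of_orderOf_dvd hbfin (pow_mem (mem_zpowers b) _) hcb
      (by rw [hord, hc]; exact dvd_pow_self p hj)
  refine mem_zpowers_of_orderOf_dvd hafin
    (zpowers_le.2 (hD.commutatorElement_mem_zpowers_left a b) hbc) (pow_mem (mem_zpowers a) _) ?_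
  rw [hord, orderOf_pow_of_dvd (pow_ne_zero _ hp.ne_zero) (ha ▸ pow_dvd_pow p (by omega)), ha,
    Nat.pow_div (by omega) hp.pos]
  exact dvd_pow_self p (by omega)

theorem exists_commutatorElement_eq_and_orderOf_lt {p j A B : ℕ} (hp : p.Prime)
    (hpj : ¬ p ^ j ∣ 2) {a b : G} (ha : orderOf a = p ^ A) (hb : orderOf b = p ^ B)
    (hBA : B ≤ A) (hc : orderOf ⁅a, b⁆ = p ^ j) :
    ∃ w, ⁅a, w⁆ = ⁅a, b⁆ ∧ ∃ B' < B, orderOf w = p ^ B' := by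
  have hj : j ≠ 0 := by rintro rfl; exact hpj (one_dvd 2)
  have h2j := hD.two_mul_le_of_orderOf_commutatorElement hp hb hc
  set N := p ^ (B - 1)
  obtain ⟨x, hx⟩ := mem_zpowers_iff.1
    (hD.pow_mem_zpowers_pow_of_orderOf_commutatorElement hp hj ha hb hBA hc)
  refine ⟨b * a ^ (-x), by rw [commutatorElement_def, commutatorElement_def]; group, ?_⟩
  have hcx : ⁅a ^ (-x), b⁆ = ⁅a, b⁆ ^ (-x) :=
    commutatorElement_zpow_left (hD.commute_commutatorElement_left a b) (-x)
  have hcN : ⁅a ^ (-x), b⁆ ^ N.choose 2 = 1 := by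
    rw [hcx, ← zpow_natCast, ← zpow_mul, mul_comm, zpow_mul, zpow_natCast,
      orderOf_dvd_iff_pow_eq_one.1 (hc ▸ Nat.prime_pow_dvd_choose_two hp hpj h2j), one_zpow]
  have haN : (a ^ (-x)) ^ N = ((a ^ N) ^ x)⁻¹ := by group
  have hwN : (b * a ^ (-x)) ^ N = 1 := by
    rw [mul_pow_of_commute_commutatorElement
      (hcx ▸ (hD.commute_commutatorElement_right a b).zpow_left (-x))
      (hcx ▸ ((hD.commute_commutatorElement_left a b).zpow_left (-x)).zpow_right (-x)),
      hcN, one_mul, haN, hx, mul_inv_cancel]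
  obtain ⟨B', hB', hw⟩ := (Nat.dvd_prime_pow hp).1 (orderOf_dvd_of_pow_eq_one hwN)
  exact ⟨B', by omega, hw⟩

theorem orderOf_commutatorElement_ne_of_le {p j A : ℕ} (hp : p.Prime) (hpj : ¬ p ^ j ∣ 2)
    {a : G} (ha : orderOf a = p ^ A) (B : ℕ) :
    ∀ b : G, orderOf b = p ^ B → B ≤ A → orderOf ⁅a, b⁆ ≠ p ^ j := by
  induction B using Nat.strong_induction_on with
  | _ B ih =>
    intro b hb hBA hc
    obtain ⟨w, hw, B', hB', hwB'⟩ :=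
      hD.exists_commutatorElement_eq_and_orderOf_lt hp hpj ha hb hBA hc
    exact ih B' hB' w hwB' (by omega) (hw ▸ hc)

theorem orderOf_commutatorElement_dvd_two_of_prime_pow {p A B : ℕ} (hp : p.Prime) {a b : G}
    (ha : orderOf a = p ^ A) (hb : orderOf b = p ^ B) : orderOf ⁅a, b⁆ ∣ 2 := by
  obtain ⟨j, -, hj⟩ := (Nat.dvd_prime_pow hp).1
    (hb ▸ orderOf_dvd_of_mem_zpowers (hD.commutatorElement_mem_zpowers_right a b))
  rw [hj]
  by_contra hpj
  rcases le_total B A with hBA | hAB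
  · exact hD.orderOf_commutatorElement_ne_of_le hp hpj ha B b hb hBA hj
  · exact hD.orderOf_commutatorElement_ne_of_le hp hpj hb A a ha hAB
      (by rw [← commutatorElement_inv, orderOf_inv, hj])

theorem orderOf_commutatorElement_dvd_two (a b : G) : orderOf ⁅a, b⁆ ∣ 2 := by
  by_cases h1 : ⁅a, b⁆ = 1
  · simp [h1]
  have hc0 : orderOf ⁅a, b⁆ ≠ 0 := ((hD.isOfFinOrder_right h1).of_mem_zpowers
    (hD.commutatorElement_mem_zpowers_right a b)).orderOf_pos.ne'
  by_contra h2
  obtain ⟨p, j, hp, hpjc, hpj⟩ := Nat.exists_prime_pow_dvd_and_not_dvd hc0 two_ne_zero h2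
  obtain ⟨m, hmp, A, hA⟩ := (hD.isOfFinOrder_left h1).exists_coprime_orderOf_pow_eq_prime_pow hp
  obtain ⟨n, hnp, B, hB⟩ := (hD.isOfFinOrder_right h1).exists_coprime_orderOf_pow_eq_prime_pow hp
  have hm : ⁅a ^ m, b⁆ = ⁅a, b⁆ ^ m := by
    simpa using commutatorElement_zpow_left (hD.commute_commutatorElement_left a b) m
  have hmn : ⁅a ^ m, b ^ n⁆ = ⁅a, b⁆ ^ (m * n) := by
    have := commutatorElement_zpow_right
      (hm ▸ (hD.commute_commutatorElement_right a b).pow_left m) n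
    rw [pow_mul, ← hm]
    simpa using this
  refine hpj ((dvd_orderOf_pow_of_coprime hpjc ?_).trans
    (hmn ▸ hD.orderOf_commutatorElement_dvd_two_of_prime_pow hp hA hB))
  exact Nat.Coprime.pow_left j (Nat.Coprime.mul_right hmp hnp)

theorem sq_mem_center (x : G) : x ^ 2 ∈ center G := by
  refine mem_center_iff.2 fun g => ?_
  have hconj : g * x * g⁻¹ = ⁅g, x⁆ * x := by rw [commutatorElement_def]; group
  have hsq : ⁅g, x⁆ ^ 2 = 1 :=
    orderOf_dvd_iff_pow_eq_one.1 (hD.orderOf_commutatorElement_dvd_two g x)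
  rw [← mul_inv_eq_iff_eq_mul, ← conj_pow, hconj,
    (hD.commute_commutatorElement_right g x).mul_pow, hsq, one_mul]

theorem mem_center_of_sq_eq_one {x : G} (hx : x ^ 2 = 1) : x ∈ center G := by
  refine mem_center_iff.2 fun g => ?_
  obtain ⟨n, hn⟩ := mem_zpowers_iff.1 (hD.conj_mem_zpowers g x)
  rw [← mul_inv_eq_iff_eq_mul, ← hn]
  obtain ⟨k, rfl | rfl⟩ := Int.even_or_odd' n
  · have h1 : g * x * g⁻¹ = 1 := by rw [← hn, zpow_mul, zpow_ofNat, hx, one_zpow]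
    rw [conj_eq_one_iff.1 h1, one_zpow]
  · rw [zpow_add, zpow_mul, zpow_ofNat, hx, one_zpow, one_mul, zpow_one]

end IsDedekind

/-- A JND group does not embed into a direct product of Dedekind groups. -/
theorem jnd_not_embed_in_prod_dedekind {G : Type*} [Group G] (hG : IsJND G)
    {I : Type*} (H : I → Type*) [∀ i, Group (H i)] (hH : ∀ i, IsDedekind (H i))
    (φ : G →* (∀ i, H i)) (hφ : Function.Injective φ) : False := by
  obtain ⟨hnot, hquot⟩ := hG
  refine hnot fun K => ⟨fun x hx g => zpowers_le.2 hx ?_⟩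
  have hcenter {y : G} (hy : ∀ i, φ y i ∈ center (H i)) : y ∈ center G :=
    mem_center_of_injective hφ (by rw [Subgroup.center_pi, mem_pi]; exact fun i _ => hy i)
  by_cases hx2 : x ^ 2 = 1
  · have hxc : x ∈ center G := hcenter fun i => (hH i).mem_center_of_sq_eq_one <| by
      rw [← Pi.pow_apply, ← map_pow, hx2, map_one, Pi.one_apply]
    rw [mem_center_iff.1 hxc g, mul_inv_cancel_right]
    exact mem_zpowers x
  · have hsq : x ^ 2 ∈ center G := hcenter fun i => by
      rw [map_pow, Pi.pow_apply]; exact (hH i).sq_mem_center _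
    have hN := normal_zpowers_of_mem_center hsq
    have hmem := (hquot _ hN (zpowers_ne_bot.2 hx2)).conj_mem_zpowers_sup g x
    rwa [sup_eq_left.2 (zpowers_le.2 (pow_mem (mem_zpowers x) 2))] at hmem
end

section
/- Every just non-Dedekind (JND) group G is monolithic: the intersection of all nontrivial normal subgroups of G is nontrivial, so G has a smallest nontrivial normal subgroup. -/
/-!
Commutators are central in a Dedekind group, so in a JND group `G` every `⁅⁅a, b⁆, z⁆` lies in
every nontrivial normal subgroup, and we are done if one of them is nontrivial. Otherwise
`G' ≤ Z(G)`, and every nontrivial normal subgroup contains a nontrivial central element `z`.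
Pick `g, y` with `g y g⁻¹ ∉ ⟨y⟩`. As `G ⧸ ⟨z⟩` is Dedekind, `g y g⁻¹ y⁻ᵐ ∈ ⟨z⟩` for some `m`.
This element does not depend on `z`: two such elements differ by a central element of `⟨y⟩`,
and no nontrivial normal subgroup `N` fits inside `⟨y⟩`, since `G ⧸ N` Dedekind would force
`g y g⁻¹ ∈ ⟨y⟩`. Hence it is a nontrivial element of every nontrivial normal subgroup.
-/

open Subgroup

open scoped commutatorElement

theorem Subgroup.normal_of_le_center {G : Type*} [Group G] {H : Subgroup G}
    (hH : H ≤ center G) : H.Normal :=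
  ⟨fun n hn g => by rwa [mem_center_iff.mp (hH hn) g, mul_inv_cancel_right]⟩

theorem Subgroup.exists_mem_center_ne_one_of_commutatorElement_mem_center {G : Type*} [Group G]
    (hcomm : ∀ a b : G, ⁅a, b⁆ ∈ center G) {N : Subgroup G} [hN : N.Normal] (hN' : N ≠ ⊥) :
    ∃ z ∈ N, z ∈ center G ∧ z ≠ 1 := by
  obtain ⟨⟨n, hn⟩, hn1⟩ := ne_bot_iff_exists_ne_one.mp hN'
  replace hn1 : n ≠ 1 := by simpa using hn1
  by_cases hcen : n ∈ center G
  · exact ⟨n, hn, hcen, hn1⟩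
  obtain ⟨h, hh⟩ : ∃ h, ¬ Commute h n := by
    simpa [mem_center_iff, Commute, SemiconjBy, eq_comm] using hcen
  refine ⟨⁅h, n⁆, ?_, hcomm h n, fun h1 => hh (commutatorElement_eq_one_iff_commute.mp h1)⟩
  rw [commutatorElement_def]
  exact N.mul_mem (hN.conj_mem n hn h) (N.inv_mem hn)

theorem exists_conj_notMem_zpowers_of_not_isDedekind {G : Type*} [Group G]
    (hG : ¬ IsDedekind G) : ∃ g y : G, g * y * g⁻¹ ∉ zpowers y := by
  by_contra! h
  exact hG fun H => ⟨fun n hn g => zpowers_le.mpr hn (h g n)⟩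

namespace IsDedekind

variable {D : Type*} [Group D]

theorem exists_conj_eq_zpow (hD : IsDedekind D) (u z : D) : ∃ i : ℤ, u * z * u⁻¹ = z ^ i := by
  obtain ⟨i, hi⟩ := mem_zpowers_iff.mp ((hD (zpowers z)).conj_mem z (mem_zpowers z) u)
  exact ⟨i, hi.symm⟩

theorem commutatorElement_mem_center (hD : IsDedekind D) (a b : D) : ⁅a, b⁆ ∈ center D := by
  refine mem_center_iff.mpr fun z => ?_
  obtain ⟨i, hi⟩ := hD.exists_conj_eq_zpow a⁻¹ z
  obtain ⟨j, hj⟩ := hD.exists_conj_eq_zpow b⁻¹ z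
  -- `a * b` and `b * a` act on `z` by the same power `z ^ (i * j)`
  have hab : (a * b)⁻¹ * z * (a * b) = z ^ (i * j) := by
    calc (a * b)⁻¹ * z * (a * b) = b⁻¹ * (a⁻¹ * z * a⁻¹⁻¹) * b⁻¹⁻¹ := by group
      _ = z ^ (i * j) := by rw [hi, ← conj_zpow, hj, ← zpow_mul, mul_comm]
  have hba : (b * a)⁻¹ * z * (b * a) = z ^ (i * j) := by
    calc (b * a)⁻¹ * z * (b * a) = a⁻¹ * (b⁻¹ * z * b⁻¹⁻¹) * a⁻¹⁻¹ := by group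
      _ = z ^ (i * j) := by rw [hj, ← conj_zpow, hi, ← zpow_mul]
  rw [commutatorElement_def]
  calc z * (a * b * a⁻¹ * b⁻¹) = (a * b) * ((a * b)⁻¹ * z * (a * b)) * (b * a)⁻¹ := by group
    _ = (a * b) * ((b * a)⁻¹ * z * (b * a)) * (b * a)⁻¹ := by rw [hab, hba]
    _ = a * b * a⁻¹ * b⁻¹ * z := by group

end IsDedekind

namespace IsJND

variable {G : Type*} [Group G]

theorem exists_conj_mul_inv_zpow_mem (hG : IsJND G) {N : Subgroup G} [hN : N.Normal]
    (hN' : N ≠ ⊥) (g y : G) : ∃ m : ℤ, g * y * g⁻¹ * (y ^ m)⁻¹ ∈ N := by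
  obtain ⟨m, hm⟩ := (hG.2 N hN hN').exists_conj_eq_zpow (g : G ⧸ N) y
  exact ⟨m, by rw [← QuotientGroup.eq_one_iff]; simp [hm]⟩

theorem commutatorElement_commutatorElement_mem (hG : IsJND G) {N : Subgroup G} [hN : N.Normal]
    (hN' : N ≠ ⊥) (a b z : G) : ⁅⁅a, b⁆, z⁆ ∈ N := by
  have hcen := (hG.2 N hN hN').commutatorElement_mem_center (a : G ⧸ N) b
  rw [← QuotientGroup.eq_one_iff, ← QuotientGroup.mk'_apply, map_commutatorElement,
    map_commutatorElement, commutatorElement_eq_one_iff_commute]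
  exact (mem_center_iff.mp hcen _).symm

theorem not_le_zpowers (hG : IsJND G) {g y : G} (hy : g * y * g⁻¹ ∉ zpowers y)
    {N : Subgroup G} [N.Normal] (hN' : N ≠ ⊥) : ¬ N ≤ zpowers y := by
  intro hle
  obtain ⟨m, hm⟩ := hG.exists_conj_mul_inv_zpow_mem hN' g y
  exact hy <| by simpa using mul_mem (hle hm) (zpow_mem (mem_zpowers y) m)

theorem eq_one_of_mem_center_of_mem_zpowers (hG : IsJND G) {g y w : G}
    (hy : g * y * g⁻¹ ∉ zpowers y) (hw : w ∈ center G) (hwy : w ∈ zpowers y) : w = 1 := by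
  by_contra hw1
  have := normal_of_le_center (zpowers_le.mpr hw)
  exact hG.not_le_zpowers hy (zpowers_ne_bot.mpr hw1) (zpowers_le.mpr hwy)

theorem exists_ne_one_forall_mem_zpowers (hG : IsJND G) {g y : G}
    (hy : g * y * g⁻¹ ∉ zpowers y) (hc : ⁅g, y⁆ ∈ center G) :
    ∃ d ≠ 1, ∀ z ∈ center G, z ≠ 1 → d ∈ zpowers z := by
  have hdefect : ∀ z ∈ center G, z ≠ 1 →
      ∃ m : ℤ, g * y * g⁻¹ * (y ^ m)⁻¹ ∈ zpowers z := fun z hz hz1 =>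
    have := normal_of_le_center (zpowers_le.mpr hz)
    hG.exists_conj_mul_inv_zpow_mem (zpowers_ne_bot.mpr hz1) g y
  have hc1 : ⁅g, y⁆ ≠ 1 := fun h => hy <| by
    rw [commutatorElement_eq_one_iff_mul_comm.mp h, mul_inv_cancel_right]
    exact mem_zpowers y
  obtain ⟨m₀, hm₀⟩ := hdefect _ hc hc1
  refine ⟨g * y * g⁻¹ * (y ^ m₀)⁻¹, fun h => hy ?_, fun z hz hz1 => ?_⟩
  · rw [mul_inv_eq_one.mp h]
    exact zpow_mem (mem_zpowers y) m₀
  obtain ⟨m, hm⟩ := hdefect z hz hz1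
  have hquot : (g * y * g⁻¹ * (y ^ m)⁻¹)⁻¹ * (g * y * g⁻¹ * (y ^ m₀)⁻¹) = y ^ (m - m₀) := by
    group
  have hcen : (g * y * g⁻¹ * (y ^ m)⁻¹)⁻¹ * (g * y * g⁻¹ * (y ^ m₀)⁻¹) ∈ center G :=
    mul_mem (inv_mem (zpowers_le.mpr hz hm)) (zpowers_le.mpr hc hm₀)
  have h1 := hG.eq_one_of_mem_center_of_mem_zpowers hy hcen
    (hquot ▸ zpow_mem (mem_zpowers y) _)
  rwa [← inv_mul_eq_one.mp h1]

theorem exists_ne_one_forall_mem (hG : IsJND G) :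
    ∃ x ≠ (1 : G), ∀ N : Subgroup G, N.Normal → N ≠ ⊥ → x ∈ N := by
  by_cases hcomm : ∀ a b : G, ⁅a, b⁆ ∈ center G
  · obtain ⟨g, y, hy⟩ := exists_conj_notMem_zpowers_of_not_isDedekind hG.1
    obtain ⟨d, hd1, hd⟩ := hG.exists_ne_one_forall_mem_zpowers hy (hcomm g y)
    refine ⟨d, hd1, fun N hN hN' => ?_⟩
    obtain ⟨z, hzN, hz, hz1⟩ := exists_mem_center_ne_one_of_commutatorElement_mem_center hcomm hN'
    exact zpowers_le.mpr hzN (hd z hz hz1)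
  · obtain ⟨a, b, z, hz⟩ : ∃ a b z : G, ⁅⁅a, b⁆, z⁆ ≠ 1 := by
      simpa [mem_center_iff, commutatorElement_eq_one_iff_mul_comm, eq_comm] using hcomm
    exact ⟨_, hz, fun N hN hN' => hG.commutatorElement_commutatorElement_mem hN' a b z⟩

end IsJND

/-- Every JND group is monolithic: it has a smallest nontrivial normal subgroup. -/
theorem jnd_monolithic {G : Type*} [Group G] (hG : IsJND G) :
    ∃ M : Subgroup G, M.Normal ∧ M ≠ ⊥ ∧
      ∀ N : Subgroup G, N.Normal → N ≠ ⊥ → M ≤ N := by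
  let S : {N : Subgroup G // N.Normal ∧ N ≠ ⊥} → Subgroup G := Subtype.val
  obtain ⟨x, hx1, hx⟩ := hG.exists_ne_one_forall_mem
  refine ⟨⨅ N, S N, normal_iInf_normal fun N => N.2.1, ?_,
    fun N hN hN' => iInf_le S ⟨N, hN, hN'⟩⟩
  exact ne_bot_iff_exists_ne_one.mpr
    ⟨⟨x, mem_iInf.mpr fun N => hx N N.2.1 N.2.2⟩, by simpa using hx1⟩
end

section
/- There exists a finite solvable group that is a just non-Dedekind (JND) group but not a just nonabelian (JNA) group. (One such group is the semidirect product of an elementary abelian group of order 9 by the quaternion group Q8 of order 8 acting faithfully and irreducibly.) -/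
/-- A group is just nonabelian (JNA) if it is nonabelian but every quotient
by a nontrivial normal subgroup is abelian. -/
def IsJNA (G : Type*) [Group G] : Prop :=
  (∃ a b : G, a * b ≠ b * a) ∧
    ∀ (N : Subgroup G) (hN : N.Normal), N ≠ ⊥ →
      letI := hN
      ∀ x y : G ⧸ N, x * y = y * x

/-!
Let `Q₈` act faithfully and irreducibly on `V = 𝔽₃²` and put `G = V ⋊ Q₈`. The action is free and
transitive on `V ∖ {0}`, so commutators with elements of `V` show that every nontrivial normal
subgroup of `G` contains `V`. Hence every proper quotient of `G` is a quotient of `G / V ≅ Q₈`,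
which is Dedekind but not abelian, while `G` itself is not Dedekind because `⟨(1,0)⟩ ≤ V` is not
`Q₈`-invariant.
-/
open Function SemidirectProduct

section Dedekind

variable {G Q : Type*} [Group G] [Group Q]

theorem IsDedekind.conj_mem_zpowers_s5 (hG : IsDedekind G) (g x : G) :
    x * g * x⁻¹ ∈ Subgroup.zpowers g :=
  (hG _).conj_mem g (Subgroup.mem_zpowers g) x

theorem isDedekind_of_forall_conj_eq_pow (h : ∀ g x : G, ∃ k : ℕ, x * g * x⁻¹ = g ^ k) :
    IsDedekind G := fun H =>
  ⟨fun g hg x => by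
    obtain ⟨k, hk⟩ := h g x
    rw [hk]
    exact H.pow_mem hg k⟩

theorem IsDedekind.quotient_of_ker_le {f : G →* Q} (hQ : IsDedekind Q)
    (N : Subgroup G) [N.Normal] (hN : f.ker ≤ N) : IsDedekind (G ⧸ N) := by
  intro H
  have hker : f.ker ≤ H.comap (QuotientGroup.mk' N) := fun x hx => by
    simp [(QuotientGroup.eq_one_iff x).mpr (hN hx), H.one_mem]
  have hcomap : (H.comap (QuotientGroup.mk' N)).Normal := by
    rw [← Subgroup.comap_map_eq_self hker]
    exact (hQ _).comap f
  simpa only [Subgroup.map_comap_eq_self_of_surjective (QuotientGroup.mk'_surjective N)]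
    using hcomap.map _ (QuotientGroup.mk'_surjective N)

theorem isJND_of_ker_le (f : G →* Q) (hQ : IsDedekind Q)
    (hG : ¬IsDedekind G) (hmin : ∀ N : Subgroup G, N.Normal → N ≠ ⊥ → f.ker ≤ N) : IsJND G :=
  ⟨hG, fun N hN hne => hQ.quotient_of_ker_le N (hmin N hN hne)⟩

theorem not_isJNA_of_ker_ne_bot {f : G →* Q} (hf : Surjective f) (hker : f.ker ≠ ⊥)
    (hQ : ∃ a b : Q, a * b ≠ b * a) : ¬IsJNA G := by
  rintro ⟨-, hG⟩
  obtain ⟨a, b, hab⟩ := hQ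
  obtain ⟨x, rfl⟩ := hf a
  obtain ⟨y, rfl⟩ := hf b
  have hxy := hG f.ker f.normal_ker hker x y
  rw [← QuotientGroup.mk_mul, ← QuotientGroup.mk_mul, QuotientGroup.eq, MonoidHom.mem_ker,
    map_mul, map_inv, inv_mul_eq_one, map_mul, map_mul] at hxy
  exact hab hxy

end Dedekind

namespace SemidirectProduct

instance {N K : Type*} [Group N] [Group K] {φ : K →* MulAut N} [Group.IsSolvable N]
    [Group.IsSolvable K] : Group.IsSolvable (N ⋊[φ] K) :=
  Group.isSolvable_of_ker_le_range inl rightHom range_inl_eq_ker_rightHom.ge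

variable {N K : Type*} [CommGroup N] [Group K] {φ : K →* MulAut N}

theorem commutator_inl_eq (g : N ⋊[φ] K) (n : N) :
    g * inl n * g⁻¹ * (inl n)⁻¹ = inl (φ g.right n * n⁻¹) := by
  ext <;> simp [mul_comm]

theorem exists_inl_mem_of_ne_bot (hfree : ∀ k ≠ 1, ∀ n ≠ 1, φ k n ≠ n) {n : N} (hn : n ≠ 1)
    {M : Subgroup (N ⋊[φ] K)} (hM : M.Normal) (hne : M ≠ ⊥) : ∃ m ≠ 1, inl m ∈ M := by
  obtain ⟨g, hgM, hg⟩ := M.bot_or_exists_ne_one.resolve_left hne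
  by_cases hr : g.right = 1
  · refine ⟨g.left, fun hl => hg (SemidirectProduct.ext hl hr), ?_⟩
    rwa [← inl_left_mul_inr_right g, hr, map_one, mul_one] at hgM
  · refine ⟨φ g.right n * n⁻¹, fun h => hfree _ hr n hn (mul_inv_eq_one.mp h), ?_⟩
    rw [← commutator_inl_eq]
    simpa only [mul_assoc] using M.mul_mem hgM (hM.conj_mem _ (M.inv_mem hgM) (inl n))

theorem range_inl_le_of_normal (hfree : ∀ k ≠ 1, ∀ n ≠ 1, φ k n ≠ n)
    (htrans : ∀ m n : N, m ≠ 1 → n ≠ 1 → ∃ k, φ k m = n) {M : Subgroup (N ⋊[φ] K)}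
    (hM : M.Normal) (hne : M ≠ ⊥) : inl.range ≤ M := by
  rintro _ ⟨n, rfl⟩
  rcases eq_or_ne n 1 with rfl | hn
  · simp [M.one_mem]
  obtain ⟨m, hm, hmM⟩ := exists_inl_mem_of_ne_bot hfree hn hM hne
  obtain ⟨k, rfl⟩ := htrans m _ hm hn
  rw [inl_aut, map_inv]
  exact hM.conj_mem _ hmM (inr k)

end SemidirectProduct

namespace QuaternionGroup

/-- `a 1` and `xa 0` act by `[[0,-1],[1,0]]` and `[[1,1],[1,-1]]`, two anticommuting matrices
of square `-1` over `𝔽₃`. -/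
instance : DistribMulAction (QuaternionGroup 2) (ZMod 3 × ZMod 3) where
  smul q v :=
    let i : ZMod 3 × ZMod 3 → ZMod 3 × ZMod 3 := fun w => (-w.2, w.1)
    match q with
    | a k => i^[k.val] v
    | xa k => let w := i^[k.val] v; (w.1 + w.2, w.1 - w.2)
  one_smul := by decide
  mul_smul := by decide
  smul_zero := by decide
  smul_add := by decide

theorem isDedekind_two : IsDedekind (QuaternionGroup 2) := by
  have hconj : ∀ g x : QuaternionGroup 2, ∃ k : Fin 4, x * g * x⁻¹ = g ^ (k : ℕ) := by decide
  exact isDedekind_of_forall_conj_eq_pow fun g x => (hconj g x).imp' Fin.val fun _ hk => hk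

instance : Group.IsSolvable (QuaternionGroup 2) :=
  have h2 : IsPGroup 2 (QuaternionGroup 2) :=
    .of_card (n := 3) (by simp [Nat.card_eq_fintype_card, card])
  have := h2.isNilpotent
  inferInstance

end QuaternionGroup

open QuaternionGroup

def q8Action : QuaternionGroup 2 →* MulAut (Multiplicative (ZMod 3 × ZMod 3)) :=
  (MulAutMultiplicative _).symm.toMonoidHom.comp (DistribMulAction.toAddAut _ _)

abbrev F3SqSemidirectQ8 := Multiplicative (ZMod 3 × ZMod 3) ⋊[q8Action] QuaternionGroup 2

theorem q8Action_free : ∀ k ≠ 1, ∀ n ≠ 1, q8Action k n ≠ n := by decide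

theorem q8Action_transitive :
    ∀ m n : Multiplicative (ZMod 3 × ZMod 3), m ≠ 1 → n ≠ 1 → ∃ k, q8Action k m = n := by
  decide

theorem not_isDedekind_f3SqSemidirectQ8 : ¬IsDedekind F3SqSemidirectQ8 := by
  intro h
  have hmem := h.conj_mem_zpowers_s5 (inl (.ofAdd (1, 0))) (inr (a 1))
  rw [← map_inv, ← inl_aut, ← MonoidHom.map_zpowers, Subgroup.mem_map_iff_mem inl_injective]
    at hmem
  obtain ⟨k, hk⟩ := Subgroup.mem_zpowers_iff.mp hmem
  apply_fun fun x => x.toAdd.2 at hk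
  simp only [toAdd_zpow, toAdd_ofAdd, Prod.smul_snd, smul_zero] at hk
  exact absurd hk (by decide)

/-- There exists a finite solvable group which is JND but not JNA. -/
theorem exists_finite_solvable_jnd_not_jna :
    ∃ (G : Type) (_ : Group G), Finite G ∧ IsSolvable G ∧ IsJND G ∧ ¬ IsJNA G := by
  have hker : (rightHom : F3SqSemidirectQ8 →* QuaternionGroup 2).ker = inl.range :=
    range_inl_eq_ker_rightHom.symm
  refine ⟨F3SqSemidirectQ8, inferInstance, .of_equiv _ equivProd.symm,
    (inferInstance : Group.IsSolvable F3SqSemidirectQ8), ?_, ?_⟩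
  · exact isJND_of_ker_le rightHom isDedekind_two not_isDedekind_f3SqSemidirectQ8 fun N hN hne =>
      hker ▸ range_inl_le_of_normal q8Action_free q8Action_transitive hN hne
  · refine not_isJNA_of_ker_ne_bot rightHom_surjective ?_ ⟨a 1, xa 0, by decide⟩
    rw [hker, Ne, MonoidHom.range_eq_bot_iff]
    exact fun h => absurd (DFunLike.congr_fun h (.ofAdd (1, 0))) (inl_injective.ne (by decide))
end

section
/- Let G be a finite solvable group that is just non-Dedekind (JND) but not just nonabelian (JNA), with A a normal elementary abelian p-subgroup of G that is the monolith of G, and X a nonabelian Dedekind subgroup of G with A ∩ X = 1, G = AX, and the conjugation action of X on A faithful and irreducible. Then the stabilizer in X of any nontrivial element of A under the conjugation action is trivial; that is, if x ∈ X and a ∈ A with a ≠ 1 and xax⁻¹ = a, then x = 1. -/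
/-- In a finite solvable JND-not-JNA group G = AX, the stabilizer in X of any
nontrivial element of A is trivial. -/
theorem stabilizer_trivial {G : Type*} [Group G] [Finite G]
    (hsol : IsSolvable G) (hjnd : IsJND G) (hjna : ¬ IsJNA G)
    (p : ℕ) (hp : p.Prime) (A X : Subgroup G)
    (hAn : A.Normal)
    (hAab : ∀ a b : G, a ∈ A → b ∈ A → a * b = b * a)
    (hAp : ∀ a ∈ A, a ≠ 1 → orderOf a = p)
    (hAbot : A ≠ ⊥)
    (hAmono : ∀ N : Subgroup G, N.Normal → N ≠ ⊥ → A ≤ N)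
    (hXded : IsDedekind X)
    (hXna : ¬ ∀ x y : X, x * y = y * x)
    (hAX : A ⊓ X = ⊥)
    (hGAX : ∀ g : G, ∃ a ∈ A, ∃ x ∈ X, g = a * x)
    (hfaith : ∀ x ∈ X, (∀ a ∈ A, x * a * x⁻¹ = a) → x = 1)
    (hirr : ∀ B : Subgroup G, B ≤ A → (∀ x ∈ X, ∀ b ∈ B, x * b * x⁻¹ ∈ B) →
      B = ⊥ ∨ B = A) :
    ∀ x ∈ X, ∀ a ∈ A, a ≠ 1 → x * a * x⁻¹ = a → x = 1 := by
  intro x hx a ha hane hfix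
  have hxa : x * a = a * x := by rwa [mul_inv_eq_iff_eq_mul] at hfix
  set B : Subgroup G := A ⊓ Subgroup.centralizer {x} with hB
  have haB : a ∈ B := by
    refine Subgroup.mem_inf.mpr ⟨ha, ?_⟩
    rw [Subgroup.mem_centralizer_iff]
    rintro g rfl
    exact hxa
  have hinv : ∀ y ∈ X, ∀ b ∈ B, y * b * y⁻¹ ∈ B := by
    intro y hy b hb
    obtain ⟨hbA, hbC⟩ := Subgroup.mem_inf.mp hb
    refine Subgroup.mem_inf.mpr ⟨hAn.conj_mem b hbA y, ?_⟩
    have hN := hXded (Subgroup.zpowers (⟨x, hx⟩ : X))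
    have hmem := hN.conj_mem _ (Subgroup.mem_zpowers (⟨x, hx⟩ : X)) (⟨y, hy⟩ : X)⁻¹
    rw [inv_inv] at hmem
    obtain ⟨k, hk⟩ := Subgroup.mem_zpowers_iff.mp hmem
    have hkG : x ^ k = y⁻¹ * x * y := by
      have := congrArg (Subtype.val) hk
      simpa using this
    have hbx : Commute x b := (Subgroup.mem_centralizer_iff.mp hbC) x rfl
    have hbk : (y⁻¹ * x * y) * b = b * (y⁻¹ * x * y) := by
      rw [← hkG]; exact hbx.zpow_left k
    rw [Subgroup.mem_centralizer_iff]
    rintro g rfl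
    calc g * (y * b * y⁻¹) = y * ((y⁻¹ * g * y) * b) * y⁻¹ := by group
      _ = y * (b * (y⁻¹ * g * y)) * y⁻¹ := by rw [hbk]
      _ = (y * b * y⁻¹) * g := by group
  rcases hirr B inf_le_left hinv with hbot | htop
  · rw [hbot, Subgroup.mem_bot] at haB
    exact absurd haB hane
  · refine hfaith x hx fun a' ha' => ?_
    have ha'B : a' ∈ B := htop ▸ ha'
    have hc := (Subgroup.mem_centralizer_iff.mp (Subgroup.mem_inf.mp ha'B).2) x rfl
    rw [mul_inv_eq_iff_eq_mul]
    exact hc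
end

section
/- Let G be a finite solvable group that is just non-Dedekind (JND) but not just nonabelian (JNA), with A a normal elementary abelian p-subgroup of G of order p^n that is the monolith of G, and X a nonabelian Dedekind subgroup of G with A ∩ X = 1, G = AX, and the conjugation action of X on A faithful and irreducible. Then the order of X divides p^n − 1; in particular, p does not divide the order of X. -/
/-- If a finite group acts freely on a finite type, the order of the group divides
the cardinality of the type. -/
lemma card_dvd_of_free {H S : Type*} [Group H] [Finite H] [Finite S] [MulAction H S]
    (hfree : ∀ (h : H) (s : S), h • s = s → h = 1) :
    Nat.card H ∣ Nat.card S := by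
  classical
  cases nonempty_fintype H
  cases nonempty_fintype S
  have hstab : ∀ s : S, MulAction.stabilizer H s = ⊥ := fun s =>
    (Subgroup.eq_bot_iff_forall _).2 fun h hh => hfree h s hh
  have e := MulAction.selfEquivSigmaOrbitsQuotientStabilizer H S
  letI : Fintype (Quotient (MulAction.orbitRel H S)) := Fintype.ofFinite _
  letI : ∀ ω : Quotient (MulAction.orbitRel H S),
      Fintype (H ⧸ MulAction.stabilizer H ω.out) := fun _ => Fintype.ofFinite _
  have h1 : ∀ s : S, Nat.card (H ⧸ MulAction.stabilizer H s) = Nat.card H := fun s => by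
    rw [hstab s]
    exact Nat.card_congr (QuotientGroup.quotientBot (G := H)).toEquiv
  have h2 : Nat.card S =
      ∑ ω : Quotient (MulAction.orbitRel H S),
        Nat.card (H ⧸ MulAction.stabilizer H ω.out) := by
    rw [Nat.card_congr e, Nat.card_eq_fintype_card, Fintype.card_sigma]
    simp [Nat.card_eq_fintype_card]
  rw [h2]
  simp only [h1, Finset.sum_const, smul_eq_mul]
  exact Dvd.intro_left _ rfl


/-- In a finite solvable JND-not-JNA group G = AX with |A| = p^n, the order of X
divides p^n - 1; in particular p does not divide |X|. -/
theorem card_X_dvd {G : Type*} [Group G] [Finite G]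
    (hsol : IsSolvable G) (hjnd : IsJND G) (hjna : ¬ IsJNA G)
    (p : ℕ) (hp : p.Prime) (A X : Subgroup G)
    (hAn : A.Normal)
    (hAab : ∀ a b : G, a ∈ A → b ∈ A → a * b = b * a)
    (hAp : ∀ a ∈ A, a ≠ 1 → orderOf a = p)
    (hAbot : A ≠ ⊥)
    (hAmono : ∀ N : Subgroup G, N.Normal → N ≠ ⊥ → A ≤ N)
    (hXded : IsDedekind X)
    (hXna : ¬ ∀ x y : X, x * y = y * x)
    (hAX : A ⊓ X = ⊥)
    (hGAX : ∀ g : G, ∃ a ∈ A, ∃ x ∈ X, g = a * x)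
    (hfaith : ∀ x ∈ X, (∀ a ∈ A, x * a * x⁻¹ = a) → x = 1)
    (hirr : ∀ B : Subgroup G, B ≤ A → (∀ x ∈ X, ∀ b ∈ B, x * b * x⁻¹ ∈ B) →
      B = ⊥ ∨ B = A)
    (n : ℕ) (hcard : Nat.card A = p ^ n) :
    Nat.card X ∣ p ^ n - 1 ∧ ¬ p ∣ Nat.card X := by
  classical
  -- Step 1: the action of X on A \ {1} is free.
  have key : ∀ x ∈ X, ∀ a ∈ A, a ≠ 1 → x * a * x⁻¹ = a → x = 1 := by
    intro x hx a ha hane hfix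
    set B : Subgroup G := A ⊓ Subgroup.centralizer {x} with hBdef
    have hBA : B ≤ A := inf_le_left
    have hBinv : ∀ y ∈ X, ∀ b ∈ B, y * b * y⁻¹ ∈ B := by
      intro y hy b hb
      obtain ⟨hbA, hbC⟩ := hb
      have hbx : x * b = b * x := (Subgroup.mem_centralizer_iff.1 hbC x rfl)
      refine ⟨hAn.conj_mem b hbA y, Subgroup.mem_centralizer_iff.2 ?_⟩
      intro g hg
      obtain rfl : g = x := Set.eq_of_mem_singleton hg
      -- ⟨x⟩ is normal in X since X is Dedekind
      have hZ : (Subgroup.zpowers (⟨g, hx⟩ : X)).Normal := hXded _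
      have hmem : (⟨y, hy⟩ : X)⁻¹ * ⟨g, hx⟩ * (⟨y, hy⟩ : X)⁻¹⁻¹ ∈
          Subgroup.zpowers (⟨g, hx⟩ : X) :=
        hZ.conj_mem _ (Subgroup.mem_zpowers _) _
      obtain ⟨k, hk⟩ := hmem
      have hk' : g ^ k = y⁻¹ * g * y := by
        have := congrArg (Subtype.val) hk
        simpa using this
      have hbk : g ^ k * b = b * g ^ k := by
        have hc : Commute g b := hbx
        exact (hc.zpow_left k).eq
      have h5 : (y⁻¹ * g * y) * b = b * (y⁻¹ * g * y) := by rw [← hk']; exact hbk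
      calc g * (y * b * y⁻¹) = y * ((y⁻¹ * g * y) * b) * y⁻¹ := by group
        _ = y * (b * (y⁻¹ * g * y)) * y⁻¹ := by rw [h5]
        _ = (y * b * y⁻¹) * g := by group
    have haB : a ∈ B := by
      refine ⟨ha, Subgroup.mem_centralizer_iff.2 ?_⟩
      intro g hg
      obtain rfl : g = x := Set.eq_of_mem_singleton hg
      have h6 : g * a = a * g := by
        have := hfix
        rw [mul_inv_eq_iff_eq_mul] at this
        exact this
      exact h6
    have hBne : B ≠ ⊥ := fun h => hane (by simpa [h] using haB)
    rcases hirr B hBA hBinv with h | h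
    · exact absurd h hBne
    · refine hfaith x hx fun a' ha' => ?_
      have ha'B : a' ∈ B := h ▸ ha'
      have hc : x * a' = a' * x := Subgroup.mem_centralizer_iff.1 ha'B.2 x rfl
      rw [hc]; group
  have hn : n ≠ 0 := by
    rintro rfl
    exact hAbot (Subgroup.card_eq_one.1 (by simpa using hcard))
  letI : MulAction ↥X {a : ↥A // a ≠ 1} :=
    { smul := fun x s => ⟨⟨(x : G) * (s.1 : G) * (x : G)⁻¹, hAn.conj_mem _ s.1.2 _⟩, by
        intro h
        apply s.2
        have : (x : G) * (s.1 : G) * (x : G)⁻¹ = 1 := congrArg Subtype.val h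
        exact Subtype.ext (conj_eq_one_iff.1 this)⟩
      one_smul := fun s => by
        apply Subtype.ext; apply Subtype.ext
        show ((1 : ↥X) : G) * (s.1 : G) * ((1 : ↥X) : G)⁻¹ = (s.1 : G)
        simp
      mul_smul := fun x y s => by
        apply Subtype.ext; apply Subtype.ext
        show ((x * y : ↥X) : G) * (s.1 : G) * ((x * y : ↥X) : G)⁻¹ =
          (x : G) * ((y : G) * (s.1 : G) * (y : G)⁻¹) * (x : G)⁻¹
        push_cast
        group }
  have hfree : ∀ (x : ↥X) (s : {a : ↥A // a ≠ 1}), x • s = s → x = 1 := by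
    intro x s hxs
    have h1 : (x : G) * (s.1 : G) * (x : G)⁻¹ = (s.1 : G) :=
      congrArg Subtype.val (congrArg Subtype.val hxs)
    have h2 : (s.1 : G) ≠ 1 := fun h => s.2 (Subtype.ext h)
    exact Subtype.ext (key x x.2 s.1 s.1.2 h2 h1)
  have hdvd : Nat.card ↥X ∣ Nat.card {a : ↥A // a ≠ 1} := card_dvd_of_free hfree
  have hcardS : Nat.card {a : ↥A // a ≠ 1} = p ^ n - 1 := by
    haveI : Unique {a : ↥A // a = 1} :=
      ⟨⟨⟨1, rfl⟩⟩, by rintro ⟨a, rfl⟩; rfl⟩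
    have e := (Equiv.sumCompl (fun a : ↥A => a = 1)).symm
    have h7 : Nat.card ↥A = 1 + Nat.card {a : ↥A // a ≠ 1} := by
      rw [Nat.card_congr e, Nat.card_sum, Nat.card_unique]
    have hpos : 1 ≤ p ^ n := Nat.one_le_iff_ne_zero.2 (pow_ne_zero n hp.pos.ne')
    omega
  rw [hcardS] at hdvd
  refine ⟨hdvd, fun hpdvd => ?_⟩
  have h1 : p ∣ p ^ n - 1 := hpdvd.trans hdvd
  have h2 : p ∣ p ^ n := dvd_pow_self p hn
  have h3 : p ∣ 1 := by
    have h4 := Nat.dvd_sub h2 h1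
    rwa [Nat.sub_sub_self (Nat.one_le_iff_ne_zero.2 (pow_ne_zero n hp.pos.ne'))] at h4
  exact hp.one_lt.ne' (Nat.dvd_one.1 h3)
end

section
/- Let G be a finite nonsolvable just non-Dedekind (JND) group. Then G is semisimple: every solvable normal subgroup of G is trivial. -/
theorem IsDedekind.of_surjective {G H : Type*} [Group G] [Group H] (hG : IsDedekind G)
    {f : G →* H} (hf : Function.Surjective f) : IsDedekind H := fun K =>
  Subgroup.map_comap_eq_self_of_surjective hf K ▸ (hG _).map f hf

theorem IsDedekind.quotient {G : Type*} [Group G] (hG : IsDedekind G) (N : Subgroup G)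
    [N.Normal] : IsDedekind (G ⧸ N) :=
  hG.of_surjective (QuotientGroup.mk'_surjective N)

theorem IsDedekind.isSolvable {G : Type*} [Group G] [Finite G] (hG : IsDedekind G) :
    Group.IsSolvable G := by
  induction h : Nat.card G using Nat.strong_induction_on generalizing G with
  | _ n ih =>
  rcases subsingleton_or_nontrivial G with hsub | hnt
  · infer_instance
  obtain ⟨x, hx⟩ := exists_ne (1 : G)
  let C := Subgroup.zpowers x
  have := hG C
  have hC : 1 < Nat.card C := (Subgroup.one_lt_card_iff_ne_bot C).2 (by simpa [C] using hx)
  have hlt : Nat.card (G ⧸ C) < n := by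
    rw [← h, C.card_eq_card_quotient_mul_card_subgroup]
    exact lt_mul_of_one_lt_right Nat.card_pos hC
  have : Group.IsSolvable (G ⧸ C) := ih _ hlt (hG.quotient C) rfl
  exact (Group.isSolvable_iff_subgroup_quotient C).2 ⟨inferInstance, this⟩

/-- A finite nonsolvable JND group is semisimple: every solvable normal subgroup
is trivial. -/
theorem finite_nonsolvable_jnd_semisimple {G : Type*} [Group G] [Finite G]
    (hns : ¬ IsSolvable G) (hG : IsJND G) :
    ∀ N : Subgroup G, N.Normal → IsSolvable N → N = ⊥ := by
  intro N hN hNsolv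
  by_contra hne
  have : Group.IsSolvable (G ⧸ N) := (hG.2 N hN hne).isSolvable
  exact hns ((Group.isSolvable_iff_subgroup_quotient N).2 ⟨hNsolv, this⟩)
end

section
/- Let G be a finite nonsolvable just non-Dedekind (JND) group and let K be its monolith. Then there exist a finite nonabelian simple group H and a natural number r ≥ 1 such that K is isomorphic to the direct product of r copies of H; moreover, K is perfect (K equals its own commutator subgroup). -/
namespace Subgroup

variable {G : Type*} [Group G]

def IsMinimalNormal (S : Subgroup G) : Prop :=
  Minimal (fun N : Subgroup G => N.Normal ∧ N ≠ ⊥) S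

-- The modular law `Disjoint.disjoint_sup_right_of_disjoint_sup_left`, valid as `C` is normal.
theorem disjoint_sup_right_of_disjoint_sup_left_of_normal {A B C : Subgroup G} [C.Normal]
    (h : Disjoint A B) (hsup : Disjoint (A ⊔ B) C) : Disjoint A (B ⊔ C) := by
  rw [disjoint_def]
  intro x hxA hxBC
  rw [← SetLike.mem_coe, mul_normal, Set.mem_mul] at hxBC
  obtain ⟨b, hb, c, hc, rfl⟩ := hxBC
  have hc1 : c = 1 := disjoint_def.mp hsup
    (by simpa using mul_mem (inv_mem (mem_sup_right hb)) (mem_sup_left hxA)) hc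
  subst hc1
  exact disjoint_def.mp h (by simpa using hxA) (by simpa using hb)

theorem supIndep_insert_of_normal {ι : Type*} [DecidableEq ι] {s : Finset ι}
    {f : ι → Subgroup G} {i : ι} (hs : s.SupIndep f) (hi : (f i).Normal)
    (h : Disjoint (f i) (s.sup f)) : (insert i s).SupIndep f := by
  rw [Finset.supIndep_iff_disjoint_erase] at hs ⊢
  intro j hj
  rcases eq_or_ne j i with rfl | hji
  · exact h.mono_right (Finset.sup_mono (Finset.erase_insert_subset j s))
  · have hjs : j ∈ s := Finset.mem_of_mem_insert_of_ne hj hji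
    rw [Finset.erase_insert_of_ne hji.symm, Finset.sup_insert, sup_comm]
    exact disjoint_sup_right_of_disjoint_sup_left_of_normal (hs j hjs) <| h.symm.mono_left <|
      sup_le (Finset.le_sup hjs) (Finset.sup_mono (Finset.erase_subset j s))

theorem Normal.finset_sup {ι : Type*} {s : Finset ι} {f : ι → Subgroup G}
    (h : ∀ i ∈ s, (f i).Normal) : (s.sup f).Normal := by
  rw [Finset.sup_eq_iSup]
  exact biSup_normal _ f h

namespace IsMinimalNormal

variable {S : Subgroup G} (hS : S.IsMinimalNormal)
include hS

theorem normal : S.Normal := hS.prop.1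

theorem ne_bot : S ≠ ⊥ := hS.prop.2

theorem le_or_disjoint (N : Subgroup G) [N.Normal] : S ≤ N ∨ Disjoint S N := by
  have := hS.normal
  by_cases h : S ⊓ N = ⊥
  · exact Or.inr (disjoint_iff.mpr h)
  · exact Or.inl (inf_eq_left.mp (hS.eq_of_le ⟨inferInstance, h⟩ inf_le_left))

theorem map_mulEquiv {H : Type*} [Group H] (e : G ≃* H) :
    (S.map e.toMonoidHom).IsMinimalNormal := by
  refine ⟨⟨hS.normal.map _ e.surjective,
    (map_eq_bot_iff_of_injective _ e.injective).not.mpr hS.ne_bot⟩, fun T hT hle => ?_⟩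
  have hcomap : T.comap e.toMonoidHom = S := by
    refine hS.eq_of_le ⟨hT.1.comap _, fun hbot => hT.2 ?_⟩ ?_
    · rw [← map_comap_eq_self_of_surjective (f := e.toMonoidHom) e.surjective T, hbot, map_bot]
    · exact (comap_mono hle).trans
        (comap_map_eq_self_of_injective (f := e.toMonoidHom) e.injective S).le
  rw [← hcomap, map_comap_eq_self_of_surjective (f := e.toMonoidHom) e.surjective]

theorem isSimpleGroup_of_le_centralizer {C : Subgroup G} (hC : C ≤ centralizer S)
    (hsup : S ⊔ C = ⊤) : IsSimpleGroup S := by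
  have : Nontrivial S := (nontrivial_iff_ne_bot S).mpr hS.ne_bot
  refine ⟨fun T hT => ?_⟩
  set T' := T.map S.subtype
  have hST : S ≤ normalizer T' := by
    rw [← normal_subgroupOf_iff_le_normalizer (map_subtype_le T)]
    rwa [subgroupOf, comap_map_eq_self_of_injective S.subtype_injective]
  have hCT : C ≤ normalizer T' :=
    hC.trans ((centralizer_le (map_subtype_le T)).trans (centralizer_le_normalizer _))
  have hT'n : T'.Normal := by
    rw [← normalizer_eq_top_iff, eq_top_iff, ← hsup]
    exact sup_le hST hCT
  rcases eq_or_ne T ⊥ with hbot | hbot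
  · exact Or.inl hbot
  · refine Or.inr (map_injective S.subtype_injective ?_)
    rw [← MonoidHom.range_eq_map, range_subtype]
    exact hS.eq_of_le ⟨hT'n, (map_eq_bot_iff_of_injective _ S.subtype_injective).not.mpr hbot⟩
      (map_subtype_le T)

theorem eq_bot_or_eq_top_of_characteristic (N : Subgroup S) [N.Characteristic] :
    N = ⊥ ∨ N = ⊤ := by
  have := hS.normal
  refine (eq_or_ne N ⊥).imp_right fun hN => ?_
  have hmap : N.map S.subtype = S := hS.eq_of_le
    ⟨inferInstance, (map_eq_bot_iff_of_injective _ S.subtype_injective).not.mpr hN⟩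
    (map_subtype_le N)
  refine eq_top_iff.mpr fun x _ => (mem_map_iff_mem S.subtype_injective).mp ?_
  exact hmap.symm ▸ x.2

theorem commutator_eq_self (hns : ¬ Group.IsSolvable S) : ⁅S, S⁆ = S := by
  have := hS.normal
  refine hS.eq_of_le ⟨inferInstance, fun hbot => hns ?_⟩ (commutator_le_self S)
  have := le_centralizer_iff_isMulCommutative.mp (commutator_eq_bot_iff_le_centralizer.mp hbot)
  exact Group.isSolvable_of_comm this.is_comm.comm

end IsMinimalNormal

theorem exists_isMinimalNormal [Finite G] [Nontrivial G] : ∃ S : Subgroup G, S.IsMinimalNormal :=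
  let ⟨S, _, hS⟩ := exists_minimal_le_of_wellFoundedLT _ ⊤ ⟨normal_top, top_ne_bot⟩
  ⟨S, hS⟩

theorem characteristic_iSup_map_mulAut (S : Subgroup G) :
    (⨆ φ : G ≃* G, S.map φ.toMonoidHom).Characteristic := by
  rw [characteristic_iff_map_le]
  intro ψ
  rw [map_iSup]
  refine iSup_le fun φ => ?_
  rw [map_map]
  exact le_iSup_of_le (φ.trans ψ) le_rfl

theorem exists_supIndep_sup_eq_top {ι : Type*} [Finite ι] {f : ι → Subgroup G}
    (hf : ∀ i, (f i).IsMinimalNormal) (htop : ⨆ i, f i = ⊤) :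
    ∃ s : Finset ι, s.SupIndep f ∧ s.sup f = ⊤ := by
  classical
  obtain ⟨s, hs, hmax⟩ := (Set.toFinite {s : Finset ι | s.SupIndep f}).exists_maximal
    ⟨∅, Finset.supIndep_empty f⟩
  refine ⟨s, hs, ?_⟩
  by_contra hne
  obtain ⟨i, hi⟩ : ∃ i, ¬ f i ≤ s.sup f := by
    by_contra! h
    exact hne (eq_top_iff.mpr (htop ▸ iSup_le h))
  have := Normal.finset_sup (s := s) fun j _ => (hf j).normal
  have hdisj := ((hf i).le_or_disjoint (s.sup f)).resolve_left hi
  have hsub := hmax (supIndep_insert_of_normal hs (hf i).normal hdisj) (Finset.subset_insert i s)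
  exact hi (Finset.le_sup (hsub (Finset.mem_insert_self i s)))

theorem nonempty_mulEquiv_pi_of_iSupIndep {ι : Type*} [Fintype ι] {f : ι → Subgroup G}
    (hf : ∀ i, (f i).Normal) (hind : iSupIndep f) (htop : ⨆ i, f i = ⊤) :
    Nonempty (G ≃* ∀ i, f i) := by
  have hcomm : Pairwise fun i j => ∀ x y : G, x ∈ f i → y ∈ f j → Commute x y :=
    fun i j hij => commute_of_normal_of_disjoint _ _ (hf i) (hf j) (hind.pairwiseDisjoint hij)
  refine ⟨(MulEquiv.ofBijective (noncommPiCoprod hcomm)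
    ⟨injective_noncommPiCoprod_of_iSupIndep hind, ?_⟩).symm⟩
  rw [← MonoidHom.range_eq_top, noncommPiCoprod_range, htop]

theorem IsMinimalNormal.isSimpleGroup_of_iSupIndep {ι : Type*} {f : ι → Subgroup G} {i : ι}
    (hfi : (f i).IsMinimalNormal) (hf : ∀ j, (f j).Normal) (hind : iSupIndep f)
    (htop : ⨆ j, f j = ⊤) : IsSimpleGroup (f i) := by
  refine hfi.isSimpleGroup_of_le_centralizer (C := ⨆ (j) (_ : j ≠ i), f j)
    (iSup₂_le fun j hji y hy => mem_centralizer_iff.mpr fun x hx => ?_) ?_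
  · exact (commute_of_normal_of_disjoint _ _ (hf i) (hf j)
      (hind.pairwiseDisjoint hji.symm) _ _ hx hy).eq
  · rw [← iSup_split_single, htop]

theorem exists_isSimpleGroup_mulEquiv_pi_of_characteristic [Finite G] [Nontrivial G]
    (hG : ∀ N : Subgroup G, N.Characteristic → N = ⊥ ∨ N = ⊤) :
    ∃ (S : Subgroup G) (r : ℕ), IsSimpleGroup S ∧ 1 ≤ r ∧ Nonempty (G ≃* (Fin r → S)) := by
  classical
  obtain ⟨S, hS⟩ := exists_isMinimalNormal (G := G)
  set f : (G ≃* G) → Subgroup G := fun φ => S.map φ.toMonoidHom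
  have hf : ∀ φ, (f φ).IsMinimalNormal := hS.map_mulEquiv
  have htop : ⨆ φ, f φ = ⊤ := by
    refine (hG _ (characteristic_iSup_map_mulAut S)).resolve_left fun hbot => hS.ne_bot ?_
    rw [eq_bot_iff, ← hbot]
    simpa [f] using le_iSup f (MulEquiv.refl G)
  obtain ⟨s, hind, hsup⟩ := exists_supIndep_sup_eq_top hf htop
  have htop' : ⨆ φ : s, f φ = ⊤ := by
    rw [← hsup, Finset.sup_eq_iSup, iSup_subtype']
  obtain ⟨φ₀, hφ₀⟩ : s.Nonempty := by
    rw [Finset.nonempty_iff_ne_empty]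
    rintro rfl
    exact bot_ne_top hsup
  have : IsSimpleGroup (f φ₀) := (hf φ₀).isSimpleGroup_of_iSupIndep (f := fun φ : s => f φ)
    (i := ⟨φ₀, hφ₀⟩) (fun φ => (hf φ).normal) hind.independent htop'
  obtain ⟨e⟩ :=
    nonempty_mulEquiv_pi_of_iSupIndep (fun φ : s => (hf φ).normal) hind.independent htop'
  have : IsSimpleGroup S := MulEquiv.isSimpleGroup (H := f φ₀) (MulEquiv.subgroupMap φ₀ S)
  refine ⟨S, s.card, this, Finset.card_pos.mpr ⟨φ₀, hφ₀⟩, ⟨?_⟩⟩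
  exact e.trans ((MulEquiv.piCongrRight fun φ => (MulEquiv.subgroupMap φ.1 S).symm).trans
    (MulEquiv.arrowCongr s.equivFin (MulEquiv.refl S)))

end Subgroup

open Subgroup

theorem IsDedekind.isNilpotent {G : Type*} [Group G] [Finite G] (h : IsDedekind G) :
    Group.IsNilpotent G :=
  (Group.isNilpotent_of_finite_tfae.out 0 2).mpr fun H _ => h H

theorem not_isSolvable_of_isDedekind_quotient {G : Type*} [Group G] [Finite G] {N : Subgroup G}
    [N.Normal] (hG : ¬ Group.IsSolvable G) (hN : IsDedekind (G ⧸ N)) :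
    ¬ Group.IsSolvable N := fun hNs =>
  have := hN.isNilpotent
  hG ((Group.isSolvable_iff_subgroup_quotient N).mpr ⟨hNs, inferInstance⟩)

/-- The monolith of a finite nonsolvable JND group is a direct product of copies of a
finite nonabelian simple group; moreover it is perfect. -/
theorem monolith_of_nonsolvable_jnd {G : Type*} [Group G] [Finite G]
    (hns : ¬ IsSolvable G) (hG : IsJND G)
    (K : Subgroup G) (hKn : K.Normal) (hKbot : K ≠ ⊥)
    (hKmono : ∀ N : Subgroup G, N.Normal → N ≠ ⊥ → K ≤ N) :
    ∃ (H : Type) (_ : Group H) (r : ℕ), Finite H ∧ IsSimpleGroup H ∧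
      (¬ ∀ a b : H, a * b = b * a) ∧ 1 ≤ r ∧
      Nonempty (K ≃* (Fin r → H)) ∧ ⁅K, K⁆ = K := by
  have hK : K.IsMinimalNormal := ⟨⟨hKn, hKbot⟩, fun N hN _ => hKmono N hN.1 hN.2⟩
  have hKns : ¬ Group.IsSolvable K := not_isSolvable_of_isDedekind_quotient hns (hG.2 K hKn hKbot)
  have : Nontrivial K := (nontrivial_iff_ne_bot K).mpr hKbot
  obtain ⟨S, r, hS, hr, ⟨e⟩⟩ :=
    exists_isSimpleGroup_mulEquiv_pi_of_characteristic fun N _ =>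
      hK.eq_bot_or_eq_top_of_characteristic N
  let e' : K ≃* (Fin r → Shrink.{0} S) :=
    e.trans (MulEquiv.arrowCongr (Equiv.refl _) Shrink.mulEquiv.symm)
  refine ⟨Shrink.{0} S, inferInstance, r, inferInstance, Shrink.mulEquiv.isSimpleGroup,
    fun hcomm => hKns ?_, hr, ⟨e'⟩, hK.commutator_eq_self hKns⟩
  have := Group.isSolvable_of_comm (G := Fin r → Shrink.{0} S) fun a b =>
    funext fun i => hcomm (a i) (b i)
  exact Group.isSolvable_of_isSolvable_injective (f := e'.toMonoidHom) e'.injective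
end
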